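/- arXiv:2311.06148 — 2 statements merged into one kernel-verified Lean document; each statement's English description precedes it below -/
import Mathlib

section
/- Let Λ be an Artin algebra and C a subcategory of mod Λ closed under direct sums with Φ-dim(C) = n < ∞. Then Ψ-dim(C) < ∞ if and only if fin.dim(add Ω^t C) < ∞ for some t ≥ n. -/
open scoped Classical

/-- An abstract model of the category `mod Λ` of finitely generated left modules over
an Artin algebra `Λ`, presented through the Krull–Schmidt theorem: a finitely
generated module is (the isomorphism class of) a finite multiset of indecomposable
modules.  The data records which indecomposables are projective, and the multiset of
indecomposable direct summands of the syzygy of each indecomposable (the kernel of a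
projective cover). -/
structure ModData where
  /-- iso classes of indecomposable finitely generated modules -/
  Idec : Type
  /-- which indecomposables are projective -/
  proj : Idec → Prop
  /-- the syzygy of an indecomposable -/
  syz : Idec → Multiset Idec

namespace ModData

variable (Λ : ModData)

/-- finitely generated `Λ`-modules (multisets of indecomposables) -/
abbrev Mod := Multiset Λ.Idec

/-- the syzygy operator `Ω` (extended additively) -/
def Ω (X : Λ.Mod) : Λ.Mod := X.bind Λ.syz

/-- `X` is a projective module -/
def IsProj (X : Λ.Mod) : Prop := ∀ i ∈ X, Λ.proj i

/-- the projective dimension `pd X ∈ ℕ∞`: the least `m` with `Ω^[m] X` projective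
(and `⊤` if there is no such `m`) -/
noncomputable def pd (X : Λ.Mod) : ℕ∞ :=
  sInf ((fun m : ℕ => (m : ℕ∞)) '' {m : ℕ | Λ.IsProj (Λ.Ω^[m] X)})

/-- the free abelian group `K` on the iso classes of indecomposable non-projective
finitely generated modules -/
abbrev K := FreeAbelianGroup {i : Λ.Idec // ¬ Λ.proj i}

/-- the class `[X]` of an indecomposable in `K` (projectives are sent to `0`) -/
noncomputable def cls (i : Λ.Idec) : Λ.K :=
  if h : Λ.proj i then 0 else FreeAbelianGroup.of ⟨i, h⟩

/-- the class `[X] ∈ K` of a module `X` -/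
noncomputable def clsM (X : Λ.Mod) : Λ.K := (X.map Λ.cls).sum

/-- the endomorphism `L` of `K` with `L [X] = [Ω X]` -/
noncomputable def L : Λ.K →+ Λ.K :=
  FreeAbelianGroup.lift fun i => Λ.clsM (Λ.syz i.1)

/-- `⟨X⟩` : the subgroup of `K` generated by the classes of the indecomposable
non-projective direct summands of `X` -/
def gen (X : Λ.Mod) : AddSubgroup Λ.K :=
  AddSubgroup.closure (Λ.cls '' {i | i ∈ X})

/-- the rank of a subgroup of `K` -/
noncomputable def rk (H : AddSubgroup Λ.K) : Cardinal :=
  Module.rank ℤ (AddSubgroup.toIntSubmodule H)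

/-- the iterated image `L^k H` of a subgroup of `K` -/
noncomputable def Lpow (k : ℕ) (H : AddSubgroup Λ.K) : AddSubgroup Λ.K :=
  (fun H' => AddSubgroup.map Λ.L H')^[k] H

/-- the (first) Igusa–Todorov function
`Φ(X) = min {n | rk L^k⟨X⟩ = rk L^(k+1)⟨X⟩ for all k ≥ n}` -/
noncomputable def Phi (X : Λ.Mod) : ℕ :=
  sInf {n : ℕ | ∀ k, n ≤ k →
    Λ.rk (Λ.Lpow k (Λ.gen X)) = Λ.rk (Λ.Lpow (k + 1) (Λ.gen X))}

/-- `add C` : the closure of a class of modules under finite direct sums and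
direct summands -/
def addCl (C : Set Λ.Mod) : Set Λ.Mod :=
  {X | ∃ Y ∈ AddSubmonoid.closure C, X ≤ Y}

/-- `C ⊕ D` : the class of direct sums of a module of `C` and a module of `D` -/
def oplus (C D : Set Λ.Mod) : Set Λ.Mod :=
  {X | ∃ Y ∈ C, ∃ Z ∈ D, X = Y + Z}

/-- the finitistic dimension of a class:
`fin.dim C = sup {pd X | X ∈ C, pd X < ∞}` -/
noncomputable def findim (C : Set Λ.Mod) : ℕ∞ :=
  sSup (Λ.pd '' {X | X ∈ C ∧ Λ.pd X ≠ ⊤})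

/-- the (second) Igusa–Todorov function
`Ψ(X) = Φ(X) + fin.dim (add Ω^(Φ X) X)` -/
noncomputable def Psi (X : Λ.Mod) : ℕ∞ :=
  (Λ.Phi X : ℕ∞) + Λ.findim (Λ.addCl {Λ.Ω^[Λ.Phi X] X})

/-- the `Φ`-dimension of a class -/
noncomputable def PhiDim (C : Set Λ.Mod) : ℕ∞ := ⨆ X ∈ C, (Λ.Phi X : ℕ∞)

/-- the `Ψ`-dimension of a class -/
noncomputable def PsiDim (C : Set Λ.Mod) : ℕ∞ := ⨆ X ∈ C, Λ.Psi X

/-- `C` is an `(n,t,V,D)`-GLIT class, relative to the relation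
`ses X₁ X₀ Z` ↔ "there is a short exact sequence `0 → X₁ → X₀ → Z → 0`":
`D` is additively closed, `t`-syzygy invariant with `Φ`-dim`(D) < ∞`, and every
`C ∈ 𝒞` admits a s.e.s. `0 → V₁ ⊕ D₁ → V₀ ⊕ D₀ → Ω^n C → 0` with `Vᵢ ∈ add V`,
`Dᵢ ∈ D`. -/
def IsGLIT (ses : Λ.Mod → Λ.Mod → Λ.Mod → Prop) (C : Set Λ.Mod)
    (n t : ℕ) (V : Λ.Mod) (D : Set Λ.Mod) : Prop :=
  1 ≤ t ∧ Λ.addCl D = D ∧ (∀ X ∈ D, Λ.Ω^[t] X ∈ D) ∧ Λ.PhiDim D ≠ ⊤ ∧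
    ∀ X ∈ C, ∃ V₁ ∈ Λ.addCl {V}, ∃ V₀ ∈ Λ.addCl {V}, ∃ D₁ ∈ D, ∃ D₀ ∈ D,
      ses (V₁ + D₁) (V₀ + D₀) (Λ.Ω^[n] X)

/-- the subgroup of `K` generated by the classes of the summands of modules of `D` -/
noncomputable def relSub (D : Set Λ.Mod) : AddSubgroup Λ.K :=
  AddSubgroup.closure (Λ.cls '' {i | ∃ X ∈ D, i ∈ X})

/-- the rank of (the image of) a subgroup of `K` in the quotient of `K` by the
classes of modules of `D` -/
noncomputable def rkRel (D : Set Λ.Mod) (H : AddSubgroup Λ.K) : Cardinal :=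
  Module.rank ℤ
    ((AddSubgroup.toIntSubmodule H).map (AddSubgroup.toIntSubmodule (Λ.relSub D)).mkQ)

/-- the generalized Igusa–Todorov function `Φ_{[D]}` relative to a class `D`:
defined as `Φ`, but with ranks computed in the quotient of `K` by the subgroup
generated by the classes of modules in `D` (and of projectives) -/
noncomputable def PhiRel (D : Set Λ.Mod) (X : Λ.Mod) : ℕ :=
  sInf {n : ℕ | ∀ k, n ≤ k →
    Λ.rkRel D (Λ.Lpow k (Λ.gen X)) = Λ.rkRel D (Λ.Lpow (k + 1) (Λ.gen X))}

end ModData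

/-!
`Φ` is monotone under direct summands: once `rk L^(k+1)⟨Y⟩ = rk L^k⟨Y⟩`, rank-nullity
says the kernel of `L` on `L^k⟨Y⟩` has rank `0`, so `L` also preserves the rank of the
subgroup `L^k⟨X⟩` for `X ≤ Y`.
If `Ψ-dim C < ∞`, pick `Y₀ ∈ C` with `Φ Y₀ = n`. Every summand of `Ω^n X` (`X ∈ C`) is
a summand of `Ω^n (X ⊕ Y₀)`, and `Φ (X ⊕ Y₀) = n`, so
`fin.dim (add Ω^n C) ≤ Ψ (X ⊕ Y₀)`.
Conversely, for `X ∈ C`, a module of `add Ω^(Φ X) X` of finite projective dimension `d`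
lands in `add Ω^t C` after `u = t - Φ X` more syzygies, with projective dimension `d - u`
when `u ≤ d`; hence `Ψ X ≤ t + fin.dim (add Ω^t C)`.
-/

open Cardinal in
theorem Submodule.rank_map_eq_of_le {R : Type*} [Ring R] [HasRankNullity.{v} R] {M N : Type v}
    [AddCommGroup M] [Module R M] [AddCommGroup N] [Module R N] (f : M →ₗ[R] N)
    {p q : Submodule R M} (hqp : q ≤ p) (hp : Module.rank R p < ℵ₀)
    (h : Module.rank R (p.map f) = Module.rank R p) :
    Module.rank R (q.map f) = Module.rank R q := by
  have hp' := (f.domRestrict p).rank_range_add_rank_ker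
  have hq' := (f.domRestrict q).rank_range_add_rank_ker
  rw [LinearMap.range_domRestrict] at hp' hq'
  have hker_p : Module.rank R (LinearMap.ker (f.domRestrict p)) = 0 := by
    rw [h, Cardinal.add_eq_left_iff] at hp'
    exact hp'.resolve_left fun h' => ((le_max_left _ _).trans h').not_gt hp
  have hker_q : Module.rank R (LinearMap.ker (f.domRestrict q)) = 0 := by
    refine le_antisymm (hker_p ▸ LinearMap.rank_le_of_injective
      ((Submodule.inclusion hqp).restrict fun _ hx => hx) ?_) zero_le
    intro x y hxy
    exact Subtype.ext (Submodule.inclusion_injective hqp (congrArg Subtype.val hxy))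
  rwa [hker_q, add_zero] at hq'

theorem AddSubmonoid.mem_closure_of_add_mem {M : Type*} [AddMonoid M] {s : Set M}
    (hs : ∀ x ∈ s, ∀ y ∈ s, x + y ∈ s) {x : M} (hx : x ∈ AddSubmonoid.closure s) :
    x = 0 ∨ x ∈ s := by
  induction hx using AddSubmonoid.closure_induction with
  | mem x hx => exact Or.inr hx
  | zero => exact Or.inl rfl
  | add x y _ _ ihx ihy =>
    rcases ihx with rfl | hx
    · rwa [zero_add]
    · rcases ihy with rfl | hy
      · rw [add_zero]; exact Or.inr hx
      · exact Or.inr (hs x hx y hy)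

namespace ModData

variable (Λ : ModData)

section Syzygy

def omegaHom : AddMonoid.End Λ.Mod where
  toFun := Λ.Ω
  map_zero' := Multiset.zero_bind _
  map_add' X Y := Multiset.add_bind X Y _

lemma iterate_Ω_add (k : ℕ) (X Y : Λ.Mod) :
    Λ.Ω^[k] (X + Y) = Λ.Ω^[k] X + Λ.Ω^[k] Y :=
  iterate_map_add Λ.omegaHom k X Y

lemma monotone_iterate_Ω (k : ℕ) : Monotone Λ.Ω^[k] := by
  intro X Y h
  obtain ⟨Z, rfl⟩ := Multiset.le_iff_exists_add.mp h
  rw [Λ.iterate_Ω_add]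
  exact Multiset.le_add_right _ _

variable {Λ}

lemma mem_addCl_of_le {D : Set Λ.Mod} {Y W : Λ.Mod} (hYW : Y ≤ W) (hW : W ∈ D) :
    Y ∈ Λ.addCl D :=
  ⟨W, AddSubmonoid.subset_closure hW, hYW⟩

lemma addCl_mono {D D' : Set Λ.Mod} (h : D ⊆ D') : Λ.addCl D ⊆ Λ.addCl D' :=
  fun _ ⟨W, hW, hYW⟩ => ⟨W, AddSubmonoid.closure_mono h hW, hYW⟩

lemma iterate_Ω_mem_addCl {D : Set Λ.Mod} {Y : Λ.Mod} (hY : Y ∈ Λ.addCl D) (k : ℕ) :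
    Λ.Ω^[k] Y ∈ Λ.addCl (Λ.Ω^[k] '' D) := by
  obtain ⟨W, hW, hYW⟩ := hY
  refine ⟨Λ.Ω^[k] W, ?_, Λ.monotone_iterate_Ω k hYW⟩
  have := AddSubmonoid.mem_map_of_mem (Λ.omegaHom ^ k) hW
  rwa [AddMonoidHom.map_mclosure, AddMonoid.End.coe_pow] at this

end Syzygy

section ProjectiveDimension

variable {Λ}

lemma pd_le {X : Λ.Mod} {m : ℕ} (h : Λ.IsProj (Λ.Ω^[m] X)) : Λ.pd X ≤ m :=
  sInf_le ⟨m, h, rfl⟩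

lemma pd_zero : Λ.pd 0 = 0 :=
  nonpos_iff_eq_zero.mp (pd_le (m := 0) fun _ hi => absurd hi (Multiset.notMem_zero _))

lemma exists_isProj_of_pd_ne_top {X : Λ.Mod} (h : Λ.pd X ≠ ⊤) :
    ∃ m : ℕ, Λ.pd X = m ∧ Λ.IsProj (Λ.Ω^[m] X) := by
  have hne : ((fun m : ℕ => (m : ℕ∞)) '' {m : ℕ | Λ.IsProj (Λ.Ω^[m] X)}).Nonempty := by
    by_contra hempty
    exact h (by rw [pd, Set.not_nonempty_iff_eq_empty.mp hempty, sInf_empty])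
  obtain ⟨m, hm, hpd⟩ := csInf_mem hne
  exact ⟨m, hpd.symm, hm⟩

lemma pd_le_add_pd_iterate_Ω (u : ℕ) (X : Λ.Mod) : Λ.pd X ≤ u + Λ.pd (Λ.Ω^[u] X) := by
  by_cases htop : Λ.pd (Λ.Ω^[u] X) = ⊤
  · simp [htop]
  obtain ⟨m, hm, hproj⟩ := exists_isProj_of_pd_ne_top htop
  rw [← Function.iterate_add_apply] at hproj
  rw [hm, ← Nat.cast_add, add_comm]
  exact pd_le hproj

lemma pd_iterate_Ω_ne_top {X : Λ.Mod} {u : ℕ} (h : Λ.pd X ≠ ⊤)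
    (hu : (u : ℕ∞) ≤ Λ.pd X) : Λ.pd (Λ.Ω^[u] X) ≠ ⊤ := by
  obtain ⟨m, hm, hproj⟩ := exists_isProj_of_pd_ne_top h
  rw [hm, Nat.cast_le] at hu
  rw [← Nat.sub_add_cancel hu, Function.iterate_add_apply] at hproj
  exact ne_top_of_le_ne_top (ENat.natCast_ne_top (m - u)) (pd_le hproj)

lemma pd_le_findim {D : Set Λ.Mod} {X : Λ.Mod} (hX : X ∈ D) (h : Λ.pd X ≠ ⊤) :
    Λ.pd X ≤ Λ.findim D :=
  le_sSup ⟨X, ⟨hX, h⟩, rfl⟩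

lemma findim_le {D : Set Λ.Mod} {c : ℕ∞} (h : ∀ X ∈ D, Λ.pd X ≠ ⊤ → Λ.pd X ≤ c) :
    Λ.findim D ≤ c :=
  sSup_le fun _ ⟨X, ⟨hX, hpd⟩, hc⟩ => hc ▸ h X hX hpd

lemma findim_mono {D D' : Set Λ.Mod} (h : D ⊆ D') : Λ.findim D ≤ Λ.findim D' :=
  findim_le fun _ hX hpd => pd_le_findim (h hX) hpd

lemma findim_le_add_findim_image_iterate_Ω (u : ℕ) (D : Set Λ.Mod) :
    Λ.findim D ≤ u + Λ.findim (Λ.Ω^[u] '' D) := by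
  refine findim_le fun X hX hpd => ?_
  rcases le_total (Λ.pd X) u with hle | hle
  · exact hle.trans le_self_add
  · calc Λ.pd X ≤ u + Λ.pd (Λ.Ω^[u] X) := Λ.pd_le_add_pd_iterate_Ω u X
      _ ≤ u + Λ.findim (Λ.Ω^[u] '' D) :=
        add_le_add_right (pd_le_findim (Set.mem_image_of_mem _ hX) (pd_iterate_Ω_ne_top hpd hle)) _

end ProjectiveDimension

section PhiMonotone

lemma Lpow_succ (k : ℕ) (H : AddSubgroup Λ.K) :
    Λ.Lpow (k + 1) H = AddSubgroup.map Λ.L (Λ.Lpow k H) :=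
  Function.iterate_succ_apply' _ _ _

lemma Lpow_mono (k : ℕ) {H H' : AddSubgroup Λ.K} (h : H' ≤ H) :
    Λ.Lpow k H' ≤ Λ.Lpow k H := by
  induction k with
  | zero => exact h
  | succ k ih =>
    rw [Λ.Lpow_succ, Λ.Lpow_succ]
    exact AddSubgroup.map_mono ih

lemma gen_mono {X Y : Λ.Mod} (h : X ≤ Y) : Λ.gen X ≤ Λ.gen Y :=
  AddSubgroup.closure_mono (Set.image_mono fun _ hi => Multiset.mem_of_le h hi)

lemma fg_gen (X : Λ.Mod) : (AddSubgroup.toIntSubmodule (Λ.gen X)).FG := by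
  rw [gen, ← Submodule.span_int_eq_addSubgroupClosure, Submodule.toAddSubgroup_toIntSubmodule]
  refine Submodule.fg_span ((X.toFinset.finite_toSet.image Λ.cls).subset ?_)
  exact Set.image_mono fun i hi => Multiset.mem_toFinset.mpr hi

lemma fg_Lpow (k : ℕ) {H : AddSubgroup Λ.K} (hH : (AddSubgroup.toIntSubmodule H).FG) :
    (AddSubgroup.toIntSubmodule (Λ.Lpow k H)).FG := by
  induction k with
  | zero => exact hH
  | succ k ih =>
    rw [Λ.Lpow_succ, ← AddMonoidHom.coe_toIntLinearMap_map]
    exact ih.map _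

lemma rk_map_L (H : AddSubgroup Λ.K) :
    Λ.rk (H.map Λ.L) =
      Module.rank ℤ ((AddSubgroup.toIntSubmodule H).map Λ.L.toIntLinearMap) := by
  rw [rk, AddMonoidHom.coe_toIntLinearMap_map]

lemma antitone_rk_Lpow (H : AddSubgroup Λ.K) : Antitone fun k => Λ.rk (Λ.Lpow k H) :=
  antitone_nat_of_succ_le fun k => by
    rw [Λ.Lpow_succ, Λ.rk_map_L]
    exact rank_map_le _ _

lemma rk_Lpow_eq_rk_Lpow_succ_of_Phi_le (X : Λ.Mod) {k : ℕ} (hk : Λ.Phi X ≤ k) :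
    Λ.rk (Λ.Lpow k (Λ.gen X)) = Λ.rk (Λ.Lpow (k + 1) (Λ.gen X)) := by
  have hstable : {n : ℕ | ∀ k, n ≤ k →
      Λ.rk (Λ.Lpow k (Λ.gen X)) = Λ.rk (Λ.Lpow (k + 1) (Λ.gen X))}.Nonempty := by
    obtain ⟨m, hm⟩ := WellFoundedLT.antitone_chain_condition (Λ.antitone_rk_Lpow (Λ.gen X))
    exact ⟨m, fun k hk => (hm k hk).symm.trans (hm (k + 1) (hk.trans k.le_succ))⟩
  exact Nat.sInf_mem hstable k hk

lemma Phi_mono {X Y : Λ.Mod} (h : X ≤ Y) : Λ.Phi X ≤ Λ.Phi Y := by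
  refine Nat.sInf_le fun k hk => ?_
  have hY := Λ.rk_Lpow_eq_rk_Lpow_succ_of_Phi_le Y hk
  rw [Λ.Lpow_succ, Λ.rk_map_L] at hY ⊢
  refine (Submodule.rank_map_eq_of_le _ ?_ ?_ hY.symm).symm
  · exact Λ.Lpow_mono k (Λ.gen_mono h)
  · have := Module.Finite.iff_fg.mpr (Λ.fg_Lpow k (Λ.fg_gen Y))
    exact Module.rank_lt_aleph0 _ _

end PhiMonotone

section Dimensions

lemma Phi_le_of_PhiDim_eq {C : Set Λ.Mod} {n : ℕ} (hn : Λ.PhiDim C = n) {X : Λ.Mod}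
    (hX : X ∈ C) : Λ.Phi X ≤ n := by
  have : (Λ.Phi X : ℕ∞) ≤ n :=
    hn ▸ le_iSup₂ (f := fun X (_ : X ∈ C) => (Λ.Phi X : ℕ∞)) X hX
  exact_mod_cast this

lemma exists_Phi_eq_of_PhiDim_eq {C : Set Λ.Mod} (hC : C.Nonempty) {n : ℕ}
    (hn : Λ.PhiDim C = n) : ∃ X ∈ C, Λ.Phi X = n := by
  have : Nonempty C := hC.to_subtype
  rw [PhiDim, iSup_subtype'] at hn
  obtain ⟨⟨X, hX⟩, hXn⟩ := ENat.exists_eq_iSup_of_lt_top (hn ▸ ENat.natCast_lt_top n)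
  exact ⟨X, hX, by exact_mod_cast hXn.trans hn⟩

lemma Psi_le_PsiDim {C : Set Λ.Mod} {X : Λ.Mod} (hX : X ∈ C) : Λ.Psi X ≤ Λ.PsiDim C :=
  le_iSup₂ (f := fun X (_ : X ∈ C) => Λ.Psi X) X hX

lemma findim_addCl_iterate_Ω_le_PsiDim {C : Set Λ.Mod}
    (hC : ∀ X ∈ C, ∀ Y ∈ C, X + Y ∈ C) {n : ℕ} (hn : Λ.PhiDim C = n) :
    Λ.findim (Λ.addCl (Λ.Ω^[n] '' C)) ≤ Λ.PsiDim C := by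
  have hΩC : ∀ W ∈ Λ.Ω^[n] '' C, ∀ W' ∈ Λ.Ω^[n] '' C, W + W' ∈ Λ.Ω^[n] '' C := by
    rintro _ ⟨X, hX, rfl⟩ _ ⟨X', hX', rfl⟩
    exact ⟨X + X', hC X hX X' hX', Λ.iterate_Ω_add n X X'⟩
  refine findim_le fun Y ⟨W, hW, hYW⟩ hpd => ?_
  rcases AddSubmonoid.mem_closure_of_add_mem hΩC hW with rfl | ⟨X, hX, rfl⟩
  · rw [nonpos_iff_eq_zero.mp hYW, pd_zero]
    exact zero_le
  obtain ⟨Y₀, hY₀, hΦY₀⟩ := Λ.exists_Phi_eq_of_PhiDim_eq ⟨X, hX⟩ hn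
  have hZ : X + Y₀ ∈ C := hC X hX Y₀ hY₀
  have hΦZ : Λ.Phi (X + Y₀) = n :=
    le_antisymm (Λ.Phi_le_of_PhiDim_eq hn hZ) (hΦY₀ ▸ Λ.Phi_mono (Multiset.le_add_left _ _))
  have hYZ : Y ∈ Λ.addCl {Λ.Ω^[n] (X + Y₀)} := by
    refine mem_addCl_of_le (hYW.trans ?_) rfl
    exact Λ.monotone_iterate_Ω n (Multiset.le_add_right _ _)
  calc Λ.pd Y ≤ Λ.findim (Λ.addCl {Λ.Ω^[n] (X + Y₀)}) := pd_le_findim hYZ hpd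
    _ ≤ Λ.Psi (X + Y₀) := by rw [Psi, hΦZ]; exact le_add_self
    _ ≤ Λ.PsiDim C := Λ.Psi_le_PsiDim hZ

lemma Psi_le_add_findim_addCl_iterate_Ω {C : Set Λ.Mod} {X : Λ.Mod} (hX : X ∈ C) {t : ℕ}
    (ht : Λ.Phi X ≤ t) : Λ.Psi X ≤ t + Λ.findim (Λ.addCl (Λ.Ω^[t] '' C)) := by
  set φ := Λ.Phi X
  have hsyz : Λ.Ω^[t - φ] '' Λ.addCl {Λ.Ω^[φ] X} ⊆ Λ.addCl (Λ.Ω^[t] '' C) := by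
    rintro _ ⟨Y, hY, rfl⟩
    have := iterate_Ω_mem_addCl hY (t - φ)
    rw [Set.image_singleton, ← Function.iterate_add_apply, Nat.sub_add_cancel ht] at this
    exact addCl_mono (Set.singleton_subset_iff.mpr (Set.mem_image_of_mem _ hX)) this
  calc Λ.Psi X = φ + Λ.findim (Λ.addCl {Λ.Ω^[φ] X}) := rfl
    _ ≤ φ + ((t - φ : ℕ) + Λ.findim (Λ.addCl (Λ.Ω^[t] '' C))) := by
      gcongr
      exact (findim_le_add_findim_image_iterate_Ω _ _).trans
        (add_le_add_right (findim_mono hsyz) _)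
    _ = t + Λ.findim (Λ.addCl (Λ.Ω^[t] '' C)) := by
      rw [← add_assoc, ← Nat.cast_add, Nat.add_sub_cancel' ht]

end Dimensions

end ModData

/-- for `C` closed under direct sums with `Φ-dim C = n < ∞`,
`Ψ-dim C < ∞` if and only if `fin.dim (add Ω^t C) < ∞` for some `t ≥ n`. -/
theorem PsiDim_finite_iff_findim_syzygies_finite (Λ : ModData) (C : Set Λ.Mod)
    (hC : ∀ X ∈ C, ∀ Y ∈ C, X + Y ∈ C)
    (n : ℕ) (hn : Λ.PhiDim C = (n : ℕ∞)) :
    Λ.PsiDim C ≠ ⊤ ↔ ∃ t : ℕ, n ≤ t ∧ Λ.findim (Λ.addCl (Λ.Ω^[t] '' C)) ≠ ⊤ := by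
  constructor
  · intro hPsi
    exact ⟨n, le_rfl, ne_top_of_le_ne_top hPsi (Λ.findim_addCl_iterate_Ω_le_PsiDim hC hn)⟩
  · rintro ⟨t, hnt, hfin⟩
    have hbound : Λ.PsiDim C ≤ t + Λ.findim (Λ.addCl (Λ.Ω^[t] '' C)) :=
      iSup₂_le fun X hX => Λ.Psi_le_add_findim_addCl_iterate_Ω hX
        ((Λ.Phi_le_of_PhiDim_eq hn hX).trans hnt)
    exact ne_top_of_le_ne_top
      (WithTop.add_ne_top.mpr ⟨ENat.natCast_ne_top t, hfin⟩) hbound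
end

section
/- Let Λ be an Artin algebra, V an indecomposable finitely generated Λ-module, and D ⊆ mod Λ an additively closed class with Φ-dim(D) = n < ∞. Then Φ-dim(D ⊕ add V) < ∞. -/
open scoped Classical

/-!
Tensoring with `ℚ` turns the ranks in the definition of `Φ` into dimensions, so `Φ X` is the step
from which `k ↦ dim Lᵏ⟨X⟩` stops dropping. Let `x` be the class of `V`. For `Y ∈ D`, adding copies
of `V` replaces `⟨Y⟩` by `⟨Y⟩ + ℚx`, which adds one to the `k`-th dimension while `Lᵏx ∉ Lᵏ⟨Y⟩`
and nothing afterwards (once inside, `Lᵏx` stays inside). It therefore suffices to bound, uniformly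
in `Y ∈ D`, the step at which `Lᵏx` enters `Lᵏ⟨Y⟩`, when it ever does.

Suppose `Lᵏx` enters `Lᵏ⟨Y₀⟩` at step `k₀`. For `Y ∈ D` the sum `Z = Y ⊕ Y₀` is in `D`, so
`Φ Z ≤ n` and `L` is injective on `Lᵏ⟨Z⟩` for `k ≥ n`. Since `Lᵏx ∈ Lᵏ⟨Z⟩` for `k ≥ k₀`, a
preimage of `Lᵏ⁺¹x` in `Lᵏ⟨Y⟩ ⊆ Lᵏ⟨Z⟩` must be `Lᵏx` itself; descending one step at a time,
`Lᵏx` enters `Lᵏ⟨Y⟩`, if at all, by step `max n k₀`.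
-/

open Module Submodule

theorem Submodule.rank_span_of_isFractionRing {R F V : Type*} [CommRing R] [CommRing F]
    [Algebra R F] [IsFractionRing R F] [AddCommGroup V] [Module R V] [Module F V]
    [IsScalarTower R F V] (J : Submodule R V) :
    Module.rank F (span F (J : Set V)) = Module.rank R J := by
  have := isLocalizedModule_id (nonZeroDivisors R) V F
  have h := J.localized'_eq_span F (nonZeroDivisors R) LinearMap.id
  rw [LinearMap.id_coe, Set.image_id] at h
  rw [← h, IsLocalization.rank_eq F (nonZeroDivisors R) le_rfl,
    IsLocalizedModule.rank_eq (nonZeroDivisors R) le_rfl (J.toLocalized' F _ LinearMap.id)]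

section IteratedImages

variable {K V : Type*} [Field K] [AddCommGroup V] [Module K V]

theorem Submodule.finrank_sup_span_singleton_of_notMem {U : Submodule K V}
    [FiniteDimensional K U] {x : V} (hx : x ∉ U) :
    finrank K ↥(U ⊔ span K {x}) = finrank K U + 1 := by
  have h := Submodule.finrank_sup_add_finrank_inf_eq U (span K {x})
  rw [(disjoint_span_singleton_of_notMem hx).eq_bot, finrank_bot,
    finrank_span_singleton (ne_of_mem_of_not_mem U.zero_mem hx).symm] at h
  omega

theorem LinearMap.injOn_of_finrank_map_eq {V₂ : Type*} [AddCommGroup V₂] [Module K V₂]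
    (f : V →ₗ[K] V₂) {P : Submodule K V} [FiniteDimensional K P]
    (h : finrank K (P.map f) = finrank K P) : Set.InjOn f P := by
  have hker : LinearMap.ker (f.domRestrict P) = ⊥ := by
    have := (f.domRestrict P).finrank_range_add_finrank_ker
    rw [LinearMap.range_domRestrict, h] at this
    exact Submodule.finrank_eq_zero.mp (by omega)
  intro a ha b hb hab
  exact congrArg Subtype.val
    (LinearMap.ker_eq_bot.mp hker (a₁ := ⟨a, ha⟩) (a₂ := ⟨b, hb⟩) hab)

variable (f : Module.End K V)

theorem Submodule.map_pow_succ (W : Submodule K V) (k : ℕ) :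
    W.map (f ^ (k + 1)) = (W.map (f ^ k)).map f := by
  rw [pow_succ', Module.End.mul_eq_comp, Submodule.map_comp]

def RankStableFrom (W : Submodule K V) (n : ℕ) : Prop :=
  ∀ k, n ≤ k → finrank K (W.map (f ^ k)) = finrank K (W.map (f ^ (k + 1)))

theorem RankStableFrom.mono {f : Module.End K V} {W : Submodule K V} {n m : ℕ}
    (h : RankStableFrom f W n) (hnm : n ≤ m) : RankStableFrom f W m :=
  fun k hk => h k (hnm.trans hk)

theorem exists_rankStableFrom (W : Submodule K V) [FiniteDimensional K W] :
    ∃ n, RankStableFrom f W n := by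
  have hanti : Antitone fun k => finrank K (W.map (f ^ k)) :=
    antitone_nat_of_succ_le fun k => by
      rw [Submodule.map_pow_succ]
      exact Submodule.finrank_map_le _ _
  obtain ⟨n, hn⟩ := WellFoundedLT.antitone_chain_condition hanti
  exact ⟨n, fun k hk => (hn k hk).symm.trans (hn (k + 1) (hk.trans k.le_succ))⟩

def Captured (W : Submodule K V) (x : V) (k : ℕ) : Prop :=
  (f ^ k) x ∈ W.map (f ^ k)

variable {f} {W W' : Submodule K V} {x : V} {k : ℕ}

theorem Captured.succ (h : Captured f W x k) : Captured f W x (k + 1) := by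
  rw [Captured, Submodule.map_pow_succ, pow_succ', Module.End.mul_apply]
  exact mem_map_of_mem h

theorem Captured.mono (h : Captured f W x k) {l : ℕ} (hkl : k ≤ l) : Captured f W x l := by
  induction l, hkl using Nat.le_induction with
  | base => exact h
  | succ l _ ih => exact ih.succ

theorem Captured.mono_left (hW : W ≤ W') (h : Captured f W x k) : Captured f W' x k :=
  map_mono hW h

theorem Captured.of_succ (h : Captured f W x (k + 1)) (hW : W ≤ W') [FiniteDimensional K W']
    (hrank : finrank K (W'.map (f ^ k)) = finrank K (W'.map (f ^ (k + 1))))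
    (hx : Captured f W' x k) : Captured f W x k := by
  rw [Captured, Submodule.map_pow_succ, pow_succ', Module.End.mul_apply] at h
  obtain ⟨u, hu, hfu⟩ := mem_map.mp h
  have hinj : Set.InjOn f (W'.map (f ^ k)) :=
    f.injOn_of_finrank_map_eq (by rw [← Submodule.map_pow_succ, hrank])
  rwa [Captured, ← hinj (map_mono hW hu) hx hfu]

theorem Captured.of_ge_max {j : ℕ} (hj : Captured f W x j) (hW : W ≤ W')
    [FiniteDimensional K W'] {n k₀ : ℕ} (hstab : RankStableFrom f W' n)
    (h₀ : Captured f W' x k₀) (hk : max n k₀ ≤ k) : Captured f W x k := by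
  suffices ∀ d k, max n k₀ ≤ k → j ≤ k + d → Captured f W x k from this j k hk (by omega)
  intro d
  induction d with
  | zero => exact fun k _ hjk => hj.mono hjk
  | succ d ih =>
    exact fun k hk hjk => (ih (k + 1) (by omega) (by omega)).of_succ hW
      (hstab k (by omega)) (h₀.mono (by omega))

theorem finrank_map_pow_sup_span_singleton_of_captured (h : Captured f W x k) :
    finrank K ((W ⊔ span K {x}).map (f ^ k)) = finrank K (W.map (f ^ k)) := by
  rw [Submodule.map_sup, map_span, Set.image_singleton,
    sup_eq_left.mpr ((span_singleton_le_iff_mem _ _).mpr h)]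

theorem finrank_map_pow_sup_span_singleton_of_not_captured [FiniteDimensional K W]
    (h : ¬ Captured f W x k) :
    finrank K ((W ⊔ span K {x}).map (f ^ k)) = finrank K (W.map (f ^ k)) + 1 := by
  rw [Submodule.map_sup, map_span, Set.image_singleton]
  exact finrank_sup_span_singleton_of_notMem h

theorem RankStableFrom.sup_span_singleton [FiniteDimensional K W] {n M : ℕ}
    (hstab : RankStableFrom f W n) (hnM : n ≤ M)
    (hx : (∀ k, ¬ Captured f W x k) ∨ ∀ k, M ≤ k → Captured f W x k) :
    RankStableFrom f (W ⊔ span K {x}) M := by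
  intro k hk
  rcases hx with hnever | halways
  · rw [finrank_map_pow_sup_span_singleton_of_not_captured (hnever k),
      finrank_map_pow_sup_span_singleton_of_not_captured (hnever (k + 1)),
      hstab k (hnM.trans hk)]
  · rw [finrank_map_pow_sup_span_singleton_of_captured (halways k hk),
      finrank_map_pow_sup_span_singleton_of_captured (halways (k + 1) (by omega))]
    exact hstab k (hnM.trans hk)

variable (f)

theorem exists_captured_threshold {ι : Type*} (W : ι → Submodule K V)
    [∀ i, FiniteDimensional K (W i)] (hW : Directed (· ≤ ·) W) {n : ℕ}
    (hstab : ∀ i, RankStableFrom f (W i) n) (x : V) :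
    ∃ M, n ≤ M ∧ ∀ i, (∀ k, ¬ Captured f (W i) x k) ∨ ∀ k, M ≤ k → Captured f (W i) x k := by
  obtain ⟨i₀, k₀, h₀⟩ | hnone := em (∃ i k, Captured f (W i) x k)
  · refine ⟨max n k₀, le_max_left _ _, fun i => or_iff_not_imp_left.mpr fun hi => ?_⟩
    obtain ⟨j, hj⟩ := not_forall_not.mp hi
    obtain ⟨i', hii', hi₀i'⟩ := hW i i₀
    exact fun k hk => hj.of_ge_max hii' (hstab i') (h₀.mono_left hi₀i') hk
  · push Not at hnone
    exact ⟨n, le_rfl, fun i => Or.inl (hnone i)⟩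

end IteratedImages

namespace ModData

variable (Λ : ModData)

abbrev Kℚ : Type := {i : Λ.Idec // ¬ Λ.proj i} →₀ ℚ

noncomputable def toKℚ : Λ.K →ₗ[ℤ] Λ.Kℚ :=
  (Finsupp.mapRange.linearMap (Algebra.linearMap ℤ ℚ)).comp
    (FreeAbelianGroup.equivFinsupp _).toIntLinearEquiv.toLinearMap

theorem toKℚ_injective : Function.Injective Λ.toKℚ :=
  (Finsupp.mapRange_injective _ (map_zero _) (algebraMap ℤ ℚ).injective_int).comp
    (FreeAbelianGroup.equivFinsupp _).injective

@[simp]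
theorem toKℚ_of (i : {i : Λ.Idec // ¬ Λ.proj i}) :
    Λ.toKℚ (FreeAbelianGroup.of i) = Finsupp.single i 1 := by
  simp [toKℚ]

noncomputable def Lℚ : Module.End ℚ Λ.Kℚ :=
  Finsupp.linearCombination ℚ fun i => Λ.toKℚ (Λ.L (FreeAbelianGroup.of i))

theorem Lℚ_toKℚ (a : Λ.K) : Λ.Lℚ (Λ.toKℚ a) = Λ.toKℚ (Λ.L a) := by
  have h : Λ.Lℚ.toAddMonoidHom.comp Λ.toKℚ.toAddMonoidHom =
      Λ.toKℚ.toAddMonoidHom.comp Λ.L :=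
    FreeAbelianGroup.lift_ext _ _ fun i => by simp [Lℚ]
  exact DFunLike.congr_fun h a

noncomputable def spanℚ (H : AddSubgroup Λ.K) : Submodule ℚ Λ.Kℚ :=
  span ℚ (Λ.toKℚ '' H)

theorem rk_eq_rank_spanℚ (H : AddSubgroup Λ.K) : Λ.rk H = Module.rank ℚ (Λ.spanℚ H) := by
  change _ = Module.rank ℚ (span ℚ ((AddSubgroup.toIntSubmodule H).map Λ.toKℚ : Set Λ.Kℚ))
  rw [rank_span_of_isFractionRing]
  exact (Submodule.equivMapOfInjective _ Λ.toKℚ_injective _).rank_eq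

theorem spanℚ_closure (s : Set Λ.K) :
    Λ.spanℚ (AddSubgroup.closure s) = span ℚ (Λ.toKℚ '' s) := by
  rw [spanℚ, ← span_int_eq_addSubgroupClosure, coe_toAddSubgroup, ← map_coe, map_span,
    span_span_of_tower]

theorem spanℚ_map_L (H : AddSubgroup Λ.K) :
    Λ.spanℚ (H.map Λ.L) = (Λ.spanℚ H).map Λ.Lℚ := by
  rw [spanℚ, spanℚ, map_span, AddSubgroup.coe_map, ← Set.image_comp, ← Set.image_comp]
  exact congrArg _ (Set.image_congr fun a _ => (Λ.Lℚ_toKℚ a).symm)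

theorem spanℚ_Lpow (k : ℕ) (H : AddSubgroup Λ.K) :
    Λ.spanℚ (Λ.Lpow k H) = (Λ.spanℚ H).map (Λ.Lℚ ^ k) := by
  induction k with
  | zero => exact (map_id _).symm
  | succ k ih =>
    rw [Lpow, Function.iterate_succ_apply', ← Lpow, spanℚ_map_L, ih, map_pow_succ]

noncomputable def genℚ (X : Λ.Mod) : Submodule ℚ Λ.Kℚ :=
  span ℚ ((fun i => Λ.toKℚ (Λ.cls i)) '' {i | i ∈ X})

instance (X : Λ.Mod) : FiniteDimensional ℚ (Λ.genℚ X) :=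
  FiniteDimensional.span_of_finite _ (X.finite_toSet.image _)

theorem spanℚ_gen (X : Λ.Mod) : Λ.spanℚ (Λ.gen X) = Λ.genℚ X := by
  rw [gen, spanℚ_closure, genℚ, Set.image_image]

theorem genℚ_add (X Y : Λ.Mod) : Λ.genℚ (X + Y) = Λ.genℚ X ⊔ Λ.genℚ Y := by
  rw [genℚ, genℚ, genℚ, ← span_union, ← Set.image_union]
  exact congrArg _ (congrArg _ (Set.ext fun _ => Multiset.mem_add))

theorem genℚ_replicate_succ (m : ℕ) (v : Λ.Idec) :
    Λ.genℚ (Multiset.replicate (m + 1) v) = span ℚ {Λ.toKℚ (Λ.cls v)} := by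
  have hmem : {i | i ∈ Multiset.replicate (m + 1) v} = {v} :=
    Set.ext fun _ => Multiset.mem_replicate.trans (and_iff_right m.succ_ne_zero)
  rw [genℚ, hmem, Set.image_singleton]

theorem rk_Lpow_gen (X : Λ.Mod) (k : ℕ) :
    Λ.rk (Λ.Lpow k (Λ.gen X)) = finrank ℚ ((Λ.genℚ X).map (Λ.Lℚ ^ k)) := by
  rw [rk_eq_rank_spanℚ, spanℚ_Lpow, spanℚ_gen, finrank_eq_rank]

theorem Phi_le_iff (X : Λ.Mod) (M : ℕ) :
    Λ.Phi X ≤ M ↔ RankStableFrom Λ.Lℚ (Λ.genℚ X) M := by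
  simp only [Phi, rk_Lpow_gen, Nat.cast_inj]
  exact ⟨fun h => RankStableFrom.mono (Nat.sInf_mem (exists_rankStableFrom _ _)) h,
    fun h => Nat.sInf_le h⟩

theorem Phi_le_PhiDim {C : Set Λ.Mod} {X : Λ.Mod} (hX : X ∈ C) :
    (Λ.Phi X : ℕ∞) ≤ Λ.PhiDim C :=
  le_iSup₂ (f := fun X (_ : X ∈ C) => (Λ.Phi X : ℕ∞)) X hX

theorem add_mem_of_addCl_eq {D : Set Λ.Mod} (hD : Λ.addCl D = D) {X Y : Λ.Mod}
    (hX : X ∈ D) (hY : Y ∈ D) : X + Y ∈ D :=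
  hD ▸ ⟨X + Y, add_mem (AddSubmonoid.subset_closure hX) (AddSubmonoid.subset_closure hY),
    le_rfl⟩

theorem eq_replicate_of_mem_addCl_singleton {v : Λ.Idec} {Z : Λ.Mod}
    (hZ : Z ∈ Λ.addCl {{v}}) : ∃ m, Z = Multiset.replicate m v := by
  obtain ⟨Y, hY, hZY⟩ := hZ
  obtain ⟨c, rfl⟩ := AddSubmonoid.mem_closure_singleton.mp hY
  rw [Multiset.nsmul_singleton] at hZY
  obtain ⟨m, -, rfl⟩ := Multiset.le_replicate_iff.mp hZY
  exact ⟨m, rfl⟩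

end ModData

/-- for an indecomposable module `V` and an additively closed class
`D` with `Φ-dim D = n < ∞` (no syzygy invariance assumed),
`Φ-dim (D ⊕ add V) < ∞`. -/
theorem PhiDim_oplus_indecomposable_finite (Λ : ModData) (v : Λ.Idec)
    (D : Set Λ.Mod) (haddD : Λ.addCl D = D)
    (n : ℕ) (hD : Λ.PhiDim D = (n : ℕ∞)) :
    Λ.PhiDim (Λ.oplus D (Λ.addCl {({v} : Λ.Mod)})) ≠ ⊤ := by
  have hstab (Y : D) : RankStableFrom Λ.Lℚ (Λ.genℚ Y) n :=
    (Λ.Phi_le_iff Y n).mp (by exact_mod_cast hD ▸ Λ.Phi_le_PhiDim Y.2)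
  have hdir : Directed (· ≤ ·) fun Y : D => Λ.genℚ Y := fun Y Y' =>
    ⟨⟨Y + Y', Λ.add_mem_of_addCl_eq haddD Y.2 Y'.2⟩, by
      simp only [ModData.genℚ_add]; exact ⟨le_sup_left, le_sup_right⟩⟩
  obtain ⟨M, hnM, hM⟩ := exists_captured_threshold Λ.Lℚ _ hdir hstab (Λ.toKℚ (Λ.cls v))
  refine ne_top_of_le_ne_top (ENat.natCast_ne_top M) (iSup₂_le ?_)
  rintro _ ⟨Y, hY, Z, hZ, rfl⟩
  obtain ⟨m, rfl⟩ := Λ.eq_replicate_of_mem_addCl_singleton hZ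
  rw [Nat.cast_le, Λ.Phi_le_iff]
  cases m with
  | zero =>
    rw [Multiset.replicate_zero, add_zero]
    exact (hstab ⟨Y, hY⟩).mono hnM
  | succ m =>
    rw [Λ.genℚ_add, Λ.genℚ_replicate_succ]
    exact (hstab ⟨Y, hY⟩).sup_span_singleton hnM (hM ⟨Y, hY⟩)
end
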